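/- arXiv:1905.00513 — 12 statements merged into one kernel-verified Lean document; each statement's English description precedes it below -/
import Mathlib

section
/- In a topological space X, for any subset S, the union S ∪ closure(interior(S)) equals the intersection of all pre-closed sets containing S, where a set is pre-closed if its complement P satisfies P ⊆ interior(closure(P)). -/
open Set

theorem stmt2 {X : Type*} [TopologicalSpace X] (S : Set X) :
    S ∪ closure (interior S) =
      ⋂₀ {P : Set X | S ⊆ P ∧ Pᶜ ⊆ interior (closure Pᶜ)} := by
  apply Set.Subset.antisymm
  · rintro x hx P ⟨hSP, hP⟩
    rcases hx with hx | hx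
    · exact hSP hx
    · by_contra hxP
      have hxU : x ∈ interior (closure Pᶜ) := hP hxP
      -- open nbhd U of x meets interior S
      have hne : (interior (closure Pᶜ) ∩ interior S).Nonempty := by
        have := mem_closure_iff.mp hx (interior (closure Pᶜ)) isOpen_interior hxU
        exact this
      obtain ⟨y, hy1, hy2⟩ := hne
      have hy3 : y ∈ closure Pᶜ := interior_subset hy1
      have hopen : IsOpen (interior (closure Pᶜ) ∩ interior S) :=
        isOpen_interior.inter isOpen_interior
      obtain ⟨z, hz1, hz2⟩ := mem_closure_iff.mp hy3 _ hopen ⟨hy1, hy2⟩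
      exact hz2 (hSP (interior_subset hz1.2))
  · intro x hx
    apply hx
    constructor
    · exact subset_union_left
    · -- (S ∪ closure (interior S))ᶜ ⊆ interior (closure (S ∪ closure (interior S))ᶜ)
      intro y hy
      simp only [Set.compl_union, Set.mem_inter_iff, Set.mem_compl_iff] at hy
      have key : (closure (interior S))ᶜ ⊆ closure ((S ∪ closure (interior S))ᶜ) := by
        intro z hz
        rw [mem_closure_iff]
        intro V hV hzV
        by_contra hemp
        push_neg at hemp
        have hsub : V ∩ (closure (interior S))ᶜ ⊆ S := by
          intro w hw
          by_contra hwS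
          exact Set.eq_empty_iff_forall_notMem.mp hemp w ⟨hw.1, by simp [hwS, hw.2]⟩
        have hopen : IsOpen (V ∩ (closure (interior S))ᶜ) :=
          hV.inter (isClosed_closure.isOpen_compl)
        have : V ∩ (closure (interior S))ᶜ ⊆ interior S :=
          hopen.subset_interior_iff.mpr hsub
        have hzint : z ∈ interior S := this ⟨hzV, hz⟩
        exact hz (subset_closure hzint)
      have : y ∈ interior ((closure (interior S))ᶜ) := by
        rw [IsOpen.interior_eq isClosed_closure.isOpen_compl]
        exact hy.2
      exact interior_mono key this
end

section
/- In a topological space X, for any subset S, the intersection S ∩ closure(interior(S)) equals the union of all semi-open sets contained in S, where a set U is semi-open if U ⊆ closure(interior(U)). -/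
open Set

theorem stmt3 {X : Type*} [TopologicalSpace X] (S : Set X) :
    S ∩ closure (interior S) =
      ⋃₀ {U : Set X | U ⊆ S ∧ U ⊆ closure (interior U)} := by
  apply Set.Subset.antisymm
  · intro x hx
    refine ⟨S ∩ closure (interior S), ⟨inter_subset_left, ?_⟩, hx⟩
    have h1 : interior S ⊆ interior (S ∩ closure (interior S)) :=
      interior_maximal (subset_inter interior_subset subset_closure) isOpen_interior
    exact fun y hy => closure_mono h1 hy.2
  · rintro x ⟨U, ⟨hUS, hU⟩, hxU⟩
    exact ⟨hUS hxU, closure_mono (interior_mono hUS) (hU hxU)⟩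
end

section
/- Let X be a topological space and T₁, T₂ : Set X → Set X operators associated with the topology such that Tᵢ(W ∩ Z) = Tᵢ(W) ∩ Tᵢ(Z) for all open W and all Z ⊆ X (for i = 1, 2). Then the intersection of an open set with a B-open set is B-open. -/
open Set Topology

def BOpen {X : Type*} (T1 T2 : Set X → Set X) (S : Set X) : Prop :=
  S ⊆ T1 S ∪ T2 S

def BClosed {X : Type*} (T1 T2 : Set X → Set X) (S : Set X) : Prop :=
  BOpen T1 T2 Sᶜ

theorem stmt5 {X : Type*} [TopologicalSpace X] (T1 T2 : Set X → Set X)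
    (h1 : ∀ U : Set X, IsOpen U → U ⊆ T1 U)
    (h2 : ∀ U : Set X, IsOpen U → U ⊆ T2 U)
    (hT1 : ∀ W Z : Set X, IsOpen W → T1 (W ∩ Z) = T1 W ∩ T1 Z)
    (hT2 : ∀ W Z : Set X, IsOpen W → T2 (W ∩ Z) = T2 W ∩ T2 Z)
    (U V : Set X) (hU : IsOpen U) (hV : BOpen T1 T2 V) :
    BOpen T1 T2 (U ∩ V) := by
  intro x hx
  rcases hV hx.2 with h | h
  · left; rw [hT1 U V hU]; exact ⟨h1 U hU hx.1, h⟩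
  · right; rw [hT2 U V hU]; exact ⟨h2 U hU hx.1, h⟩
end

section
/- The intersection of an open set with a b-open set is b-open. -/
open Set

theorem stmt8 {X : Type*} [TopologicalSpace X] (U V : Set X) (hU : IsOpen U)
    (hV : V ⊆ interior (closure V) ∪ closure (interior V)) :
    U ∩ V ⊆ interior (closure (U ∩ V)) ∪ closure (interior (U ∩ V)) := by
  rintro x ⟨hxU, hxV⟩
  rcases hV hxV with h | h
  · left
    have h1 : x ∈ interior (U ∩ closure V) := by
      rw [interior_inter, hU.interior_eq]; exact ⟨hxU, h⟩
    exact interior_mono hU.inter_closure h1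
  · right
    have h1 : x ∈ closure (U ∩ interior V) := hU.inter_closure ⟨hxU, h⟩
    refine closure_mono ?_ h1
    intro y ⟨hyU, hyV⟩
    rw [interior_inter, hU.interior_eq]; exact ⟨hyU, hyV⟩
end

section
/- In a topological space X, for any subset S, the union of all b-open sets contained in S equals sInt(S) ∪ pInt(S), where sInt(S) = S ∩ closure(interior(S)) and pInt(S) = S ∩ interior(closure(S)). -/
open Set

theorem stmt9 {X : Type*} [TopologicalSpace X] (S : Set X) :
    ⋃₀ {U : Set X | U ⊆ S ∧ U ⊆ interior (closure U) ∪ closure (interior U)} =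
      (S ∩ closure (interior S)) ∪ (S ∩ interior (closure S)) := by
  apply Set.Subset.antisymm
  · rintro x ⟨U, ⟨hUS, hUb⟩, hxU⟩
    rcases hUb hxU with h | h
    · right
      exact ⟨hUS hxU, interior_mono (closure_mono hUS) h⟩
    · left
      exact ⟨hUS hxU, closure_mono (interior_mono hUS) h⟩
  · rintro x (hx | hx)
    · -- sInt S = S ∩ closure (interior S) is b-open (in fact semi-open)
      refine ⟨S ∩ closure (interior S), ⟨inter_subset_left, ?_⟩, hx⟩
      intro y hy
      right
      have h1 : interior S ⊆ S ∩ closure (interior S) :=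
        subset_inter interior_subset subset_closure
      have h2 : interior S ⊆ interior (S ∩ closure (interior S)) :=
        interior_maximal h1 isOpen_interior
      exact closure_mono h2 hy.2
    · -- pInt S = S ∩ interior (closure S) is b-open (in fact preopen)
      refine ⟨S ∩ interior (closure S), ⟨inter_subset_left, ?_⟩, hx⟩
      intro y hy
      left
      have key : interior (closure S) ⊆ closure (S ∩ interior (closure S)) := by
        have h1 : interior (closure S) ⊆ interior (closure S) ∩ closure S :=
          subset_inter Subset.rfl interior_subset
        have h2 : interior (closure S) ∩ closure S ⊆ closure (interior (closure S) ∩ S) :=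
          isOpen_interior.inter_closure
        calc interior (closure S) ⊆ closure (interior (closure S) ∩ S) := h1.trans h2
          _ = closure (S ∩ interior (closure S)) := by rw [inter_comm]
      have : interior (closure S) ⊆ interior (closure (S ∩ interior (closure S))) :=
        interior_maximal (key) isOpen_interior |>.trans
          (interior_mono Subset.rfl)
      exact this hy.2
end

section
/- In a topological space X, for any subset S, the intersection of all b-closed sets containing S equals sCl(S) ∩ pCl(S), where sCl(S) = S ∪ interior(closure(S)) and pCl(S) = S ∪ closure(interior(S)). -/
open Set

lemma aux_int_pcl {X : Type*} [TopologicalSpace X] (S : Set X) :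
    interior (S ∪ closure (interior S)) ⊆ closure (interior S) := by
  intro x hx
  by_contra hnot
  set U := interior (S ∪ closure (interior S)) \ closure (interior S) with hU
  have hUopen : IsOpen U := isOpen_interior.sdiff isClosed_closure
  have hUS : U ⊆ S := fun y hy => (interior_subset hy.1).resolve_right hy.2
  have : U ⊆ interior S := interior_maximal hUS hUopen
  exact hnot (subset_closure (this ⟨hx, hnot⟩))

theorem stmt10 {X : Type*} [TopologicalSpace X] (S : Set X) :
    ⋂₀ {C : Set X | S ⊆ C ∧ Cᶜ ⊆ interior (closure Cᶜ) ∪ closure (interior Cᶜ)} =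
      (S ∪ interior (closure S)) ∩ (S ∪ closure (interior S)) := by
  set T := (S ∪ interior (closure S)) ∩ (S ∪ closure (interior S)) with hT
  apply subset_antisymm
  · apply sInter_subset_of_mem
    constructor
    · exact subset_inter subset_union_left subset_union_left
    · have key : interior (closure T) ∩ closure (interior T) ⊆ T := by
        have h1 : T ⊆ closure S :=
          (inter_subset_left).trans
            (union_subset subset_closure interior_subset)
        have h2 : interior (closure T) ⊆ interior (closure S) :=
          interior_mono ((closure_mono h1).trans (by rw [closure_closure]))
        have h3 : closure (interior T) ⊆ closure (interior S) := by
          have : interior T ⊆ closure (interior S) :=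
            (interior_mono inter_subset_right).trans (aux_int_pcl S)
          exact (closure_mono this).trans (by rw [closure_closure])
        intro x ⟨hxi, hxc⟩
        exact ⟨Or.inr (h2 hxi), Or.inr (h3 hxc)⟩
      intro x hx
      rw [closure_compl, interior_compl, interior_compl, closure_compl]
      by_contra hc
      simp only [mem_union, mem_compl_iff, not_or, not_not] at hc
      exact hx (key ⟨hc.2, hc.1⟩)
  · apply subset_sInter
    rintro C ⟨hSC, hb⟩
    have hC : interior (closure C) ∩ closure (interior C) ⊆ C := by
      intro x hx
      by_contra hxC
      rcases hb hxC with h | h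
      · rw [closure_compl, interior_compl] at h
        exact h hx.2
      · rw [interior_compl, closure_compl] at h
        exact h hx.1
    rintro x ⟨h1, h2⟩
    rcases h1 with h1 | h1
    · exact hSC h1
    rcases h2 with h2 | h2
    · exact hSC h2
    exact hC ⟨interior_mono (closure_mono hSC) h1,
      closure_mono (interior_mono hSC) h2⟩
end

section
/- Let f : X → Y be contra-B-continuous and g : X → Y be contra-continuous, where Y is an Urysohn space. Assume the intersection of an open set with a B-open set is B-open, and define the B-closure as intersection of all B-closed supersets. Then the set E = {x ∈ X : f(x) = g(x)} is B-closed in X. -/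
open Set Topology

theorem stmt14 {X Y : Type*} [TopologicalSpace X] [TopologicalSpace Y]
    (T1 T2 : Set X → Set X)
    (hInter : ∀ 𝒞 : Set (Set X), (∀ C ∈ 𝒞, BClosed T1 T2 C) → BClosed T1 T2 (⋂₀ 𝒞))
    (hOpenInter : ∀ U V : Set X, IsOpen U → BOpen T1 T2 V → BOpen T1 T2 (U ∩ V))
    (f g : X → Y)
    (hf : ∀ V : Set Y, IsOpen V → BClosed T1 T2 (f ⁻¹' V))
    (hg : ∀ V : Set Y, IsOpen V → IsClosed (g ⁻¹' V))
    (hY : ∀ y₁ y₂ : Y, y₁ ≠ y₂ → ∃ U V : Set Y, IsOpen U ∧ IsOpen V ∧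
      y₁ ∈ U ∧ y₂ ∈ V ∧ closure U ∩ closure V = ∅) :
    BClosed T1 T2 {x : X | f x = g x} := by
  set E := {x : X | f x = g x} with hE
  have key : ∀ z, f z ≠ g z → ∃ S, BClosed T1 T2 S ∧ E ⊆ S ∧ z ∉ S := by
    intro z hz
    obtain ⟨U, V, hU, hV, hfz, hgz, hdisj⟩ := hY _ _ hz
    refine ⟨(g ⁻¹' closure V ∩ f ⁻¹' closure U)ᶜ, ?_, ?_, ?_⟩
    · show BOpen T1 T2 (g ⁻¹' closure V ∩ f ⁻¹' closure U)ᶜᶜ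
      rw [compl_compl]
      apply hOpenInter
      · have h1 : IsClosed (g ⁻¹' (closure V)ᶜ) :=
          hg _ isClosed_closure.isOpen_compl
        have := h1.isOpen_compl
        simpa [preimage_compl] using this
      · have h1 := hf (closure U)ᶜ isClosed_closure.isOpen_compl
        unfold BClosed at h1
        simpa [preimage_compl] using h1
    · intro w hw hw'
      have hw2 : f w = g w := hw
      have : f w ∈ closure U ∩ closure V := ⟨hw'.2, hw2 ▸ hw'.1⟩
      rw [hdisj] at this
      exact this
    · simp only [mem_compl_iff, not_not]
      exact ⟨subset_closure hgz, subset_closure hfz⟩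
  let 𝒞 := {S : Set X | BClosed T1 T2 S ∧ E ⊆ S}
  have hEq : ⋂₀ 𝒞 = E := by
    apply subset_antisymm
    · intro z hz
      by_contra hzE
      obtain ⟨S, hS1, hS2, hS3⟩ := key z hzE
      exact hS3 (hz S ⟨hS1, hS2⟩)
    · intro z hz S hS
      exact hS.2 hz
  rw [← hEq]
  exact hInter 𝒞 fun C hC => hC.1
end

section
/- Under the hypotheses that f : X → Y is contra-B-continuous, g : X → Y is contra-continuous, Y is Urysohn, the B-closed sets are closed under arbitrary intersection, the intersection of an open set with a B-open set is B-open, and f = g on a B-dense subset S of X (i.e., BCl(S) = X), then f = g on all of X. -/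
open Set Topology

theorem stmt15 {X Y : Type*} [TopologicalSpace X] [TopologicalSpace Y]
    (T1 T2 : Set X → Set X)
    (hInter : ∀ 𝒞 : Set (Set X), (∀ C ∈ 𝒞, BClosed T1 T2 C) → BClosed T1 T2 (⋂₀ 𝒞))
    (hOpenInter : ∀ U V : Set X, IsOpen U → BOpen T1 T2 V → BOpen T1 T2 (U ∩ V))
    (f g : X → Y)
    (hf : ∀ V : Set Y, IsOpen V → BClosed T1 T2 (f ⁻¹' V))
    (hg : ∀ V : Set Y, IsOpen V → IsClosed (g ⁻¹' V))
    (hY : ∀ y₁ y₂ : Y, y₁ ≠ y₂ → ∃ U V : Set Y, IsOpen U ∧ IsOpen V ∧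
      y₁ ∈ U ∧ y₂ ∈ V ∧ closure U ∩ closure V = ∅)
    (S : Set X)
    (hdense : ⋂₀ {C : Set X | S ⊆ C ∧ BClosed T1 T2 C} = Set.univ)
    (heq : ∀ x ∈ S, f x = g x) :
    ∀ x : X, f x = g x := by

  classical
  set A : Set X := {x | f x ≠ g x} with hA
  -- every point of A has a B-open neighborhood inside A
  have key : ∀ x ∈ A, ∃ B : Set X, BOpen T1 T2 B ∧ x ∈ B ∧ B ⊆ A := by
    intro x hx
    obtain ⟨U, V, hU, hV, hxU, hxV, hdisj⟩ := hY (f x) (g x) hx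
    -- g ⁻¹' (closure V) is open
    have hWopen : IsOpen (g ⁻¹' closure V) := by
      have := hg (closure V)ᶜ (isClosed_closure.isOpen_compl)
      have : IsOpen (g ⁻¹' (closure V)ᶜ)ᶜ := this.isOpen_compl
      simpa [Set.preimage_compl] using this
    -- f ⁻¹' (closure U) is B-open
    have hBopen : BOpen T1 T2 (f ⁻¹' closure U) := by
      have h := hf (closure U)ᶜ (isClosed_closure.isOpen_compl)
      unfold BClosed at h
      simpa [Set.preimage_compl] using h
    refine ⟨g ⁻¹' closure V ∩ f ⁻¹' closure U,
      hOpenInter _ _ hWopen hBopen,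
      ⟨subset_closure hxV, subset_closure hxU⟩, ?_⟩
    rintro z ⟨hzV, hzU⟩ hfg
    have : f z ∈ closure U ∩ closure V := ⟨hzU, hfg ▸ hzV⟩
    rw [hdisj] at this
    exact this
  choose B hBopen hBmem hBsub using key
  -- the family of complements of these B-open sets
  set 𝒞 : Set (Set X) := {C | ∃ x, ∃ hx : x ∈ A, C = (B x hx)ᶜ} with h𝒞
  have hAc : Aᶜ = ⋂₀ 𝒞 := by
    apply Set.Subset.antisymm
    · rintro z hz C ⟨x, hx, rfl⟩
      intro hzB
      exact hz (hBsub x hx hzB)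
    · intro z hz hzA
      exact hz (B z hzA)ᶜ ⟨z, hzA, rfl⟩ (hBmem z hzA)
  have hEclosed : BClosed T1 T2 Aᶜ := by
    rw [hAc]
    apply hInter
    rintro C ⟨x, hx, rfl⟩
    unfold BClosed
    simpa [compl_compl] using hBopen x hx
  have hSE : S ⊆ Aᶜ := fun x hx hmem => hmem (heq x hx)
  intro x
  have hx : x ∈ ⋂₀ {C : Set X | S ⊆ C ∧ BClosed T1 T2 C} := by
    rw [hdense]; trivial
  have := hx Aᶜ ⟨hSE, hEclosed⟩
  by_contra h
  exact this h
end

section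
/- If f : X → Y is a contra-B-continuous surjection from a B-connected bi-operator topological space X onto a topological space Y with at least two points, then Y is not discrete. -/
open Set Topology

theorem stmt16 {X Y : Type*} [TopologicalSpace X] [TopologicalSpace Y]
    (T1 T2 : Set X → Set X) (f : X → Y)
    (hsurj : Function.Surjective f)
    (hf : ∀ V : Set Y, IsOpen V → BClosed T1 T2 (f ⁻¹' V))
    (hconn : ¬ ∃ U V : Set X, BOpen T1 T2 U ∧ BOpen T1 T2 V ∧
      U ≠ ∅ ∧ V ≠ ∅ ∧ U ∩ V = ∅ ∧ U ∪ V = Set.univ)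
    (y₁ y₂ : Y) (hne : y₁ ≠ y₂) :
    ¬ ∀ s : Set Y, IsOpen s := by
  intro hall
  apply hconn
  refine ⟨(f ⁻¹' {y₁})ᶜ, f ⁻¹' {y₁}, hf {y₁} (hall _), ?_, ?_, ?_, ?_, ?_⟩
  · have h := hf {y₁}ᶜ (hall _)
    simpa [BClosed, Set.preimage_compl] using h
  · obtain ⟨x, hx⟩ := hsurj y₂
    intro h
    have : x ∈ (f ⁻¹' {y₁})ᶜ := by simp [hx, hne.symm]
    simp [h] at this
  · obtain ⟨x, hx⟩ := hsurj y₁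
    intro h
    have : x ∈ f ⁻¹' {y₁} := by simp [hx]
    simp [h] at this
  · exact Set.compl_inter_self _
  · exact Set.compl_union_self _
end

section
/- Let f : X → Y be a surjective almost contra-B-continuous function (preimages of regular open sets are B-closed; equivalently preimages of regular closed sets are B-open). If X is B-compact (every cover of X by B-open sets has a finite subcover), then Y is contra-R-compact (every cover of Y by regular closed sets has a finite subcover). -/
open Set Topology

theorem stmt17 {X Y : Type*} [TopologicalSpace X] [TopologicalSpace Y]
    (T1 T2 : Set X → Set X) (f : X → Y)
    (hsurj : Function.Surjective f)
    (hf : ∀ V : Set Y, interior (closure V) = V → BClosed T1 T2 (f ⁻¹' V))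
    (hX : ∀ 𝒰 : Set (Set X), (∀ U ∈ 𝒰, BOpen T1 T2 U) → ⋃₀ 𝒰 = Set.univ →
      ∃ t ⊆ 𝒰, t.Finite ∧ ⋃₀ t = Set.univ) :
    ∀ 𝒞 : Set (Set Y), (∀ C ∈ 𝒞, closure (interior C) = C) → ⋃₀ 𝒞 = Set.univ →
      ∃ t ⊆ 𝒞, t.Finite ∧ ⋃₀ t = Set.univ := by
  intro 𝒞 hreg hcov
  set 𝒰 : Set (Set X) := (fun C => f ⁻¹' C) '' 𝒞 with h𝒰
  have hopen : ∀ U ∈ 𝒰, BOpen T1 T2 U := by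
    rintro U ⟨C, hC, rfl⟩
    have hro : interior (closure Cᶜ) = Cᶜ := by
      rw [closure_compl, interior_compl, hreg C hC]
    have := hf Cᶜ hro
    unfold BClosed at this
    rwa [preimage_compl, compl_compl] at this
  have hcovX : ⋃₀ 𝒰 = Set.univ := by
    rw [h𝒰, sUnion_image, ← preimage_iUnion₂, ← sUnion_eq_biUnion, hcov,
      preimage_univ]
  obtain ⟨t, ht𝒰, htfin, htcov⟩ := hX 𝒰 hopen hcovX
  have : ∀ U ∈ t, ∃ C ∈ 𝒞, f ⁻¹' C = U := fun U hU => by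
    obtain ⟨C, hC, h⟩ := ht𝒰 hU; exact ⟨C, hC, h⟩
  choose g hg₁ hg₂ using this
  classical
  refine ⟨(fun U => if h : U ∈ t then g U h else ∅) '' t, ?_, htfin.image _, ?_⟩
  · rintro C ⟨U, hU, rfl⟩; simp only [dif_pos hU]; exact hg₁ U hU
  · apply eq_univ_of_forall
    intro y
    obtain ⟨x, rfl⟩ := hsurj y
    obtain ⟨U, hUt, hxU⟩ := htcov ▸ mem_univ x
    refine ⟨g U hUt, ⟨U, hUt, dif_pos hUt⟩, ?_⟩
    rw [← hg₂ U hUt] at hxU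
    exact hxU
end

section
/- Let f : X → Y be a surjective almost contra-B-continuous function. If X is B-Lindelöf (every cover by B-open sets has a countable subcover), then Y is contra-R-Lindelöf (every cover by regular closed sets has a countable subcover). -/
open Set Topology

theorem stmt18 {X Y : Type*} [TopologicalSpace X] [TopologicalSpace Y]
    (T1 T2 : Set X → Set X) (f : X → Y)
    (hsurj : Function.Surjective f)
    (hf : ∀ V : Set Y, interior (closure V) = V → BClosed T1 T2 (f ⁻¹' V))
    (hX : ∀ 𝒰 : Set (Set X), (∀ U ∈ 𝒰, BOpen T1 T2 U) → ⋃₀ 𝒰 = Set.univ →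
      ∃ t ⊆ 𝒰, t.Countable ∧ ⋃₀ t = Set.univ) :
    ∀ 𝒞 : Set (Set Y), (∀ C ∈ 𝒞, closure (interior C) = C) → ⋃₀ 𝒞 = Set.univ →
      ∃ t ⊆ 𝒞, t.Countable ∧ ⋃₀ t = Set.univ := by
  intro 𝒞 hreg hcov
  set 𝒰 : Set (Set X) := (fun C => f ⁻¹' C) '' 𝒞 with h𝒰
  have hopen : ∀ U ∈ 𝒰, BOpen T1 T2 U := by
    rintro U ⟨C, hC, rfl⟩
    have hro : interior (closure Cᶜ) = Cᶜ := by
      rw [closure_compl, interior_compl, hreg C hC]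
    have := hf Cᶜ hro
    simpa [BClosed, BOpen, Set.preimage_compl, compl_compl] using this
  have hcovX : ⋃₀ 𝒰 = Set.univ := by
    ext x
    simp only [Set.mem_sUnion, Set.mem_univ, iff_true, h𝒰, Set.mem_image]
    have : f x ∈ ⋃₀ 𝒞 := hcov ▸ mem_univ _
    obtain ⟨C, hC, hx⟩ := this
    exact ⟨f ⁻¹' C, ⟨C, hC, rfl⟩, hx⟩
  obtain ⟨t, ht𝒰, htc, htcov⟩ := hX 𝒰 hopen hcovX
  refine ⟨{C ∈ 𝒞 | f ⁻¹' C ∈ t}, fun C hC => hC.1, ?_, ?_⟩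
  · have hinj : Set.InjOn (fun C => f ⁻¹' C) {C ∈ 𝒞 | f ⁻¹' C ∈ t} :=
      fun a _ b _ h => hsurj.preimage_injective h
    have : ((fun C => f ⁻¹' C) '' {C ∈ 𝒞 | f ⁻¹' C ∈ t}).Countable :=
      htc.mono (by rintro _ ⟨C, hC, rfl⟩; exact hC.2)
    exact Set.countable_of_injective_of_countable_image hinj this
  · ext y
    simp only [Set.mem_sUnion, Set.mem_univ, iff_true]
    obtain ⟨x, rfl⟩ := hsurj y
    have : x ∈ ⋃₀ t := htcov ▸ mem_univ _
    obtain ⟨s, hst, hxs⟩ := this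
    obtain ⟨C, hC, rfl⟩ := ht𝒰 hst
    exact ⟨C, ⟨hC, hst⟩, hxs⟩
end

section
/- Let f : X → Y be a function from a bi-operator topological space X to a topological space Y whose graph is B-regular, and suppose f is injective. Then X is B-Frechet, i.e., every singleton {x} is B-closed. -/
open Set Topology

theorem stmt19 {X Y : Type*} [TopologicalSpace X] [TopologicalSpace Y]
    (T1 T2 : Set X → Set X)
    (hInter : ∀ 𝒞 : Set (Set X), (∀ C ∈ 𝒞, BClosed T1 T2 C) → BClosed T1 T2 (⋂₀ 𝒞))
    (f : X → Y) (hinj : Function.Injective f)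
    (hgraph : ∀ x : X, ∀ y : Y, y ≠ f x →
      ∃ U : Set X, ∃ V : Set Y, BClosed T1 T2 U ∧ x ∈ U ∧
        interior (closure V) = V ∧ y ∈ V ∧ f '' U ∩ V = ∅) :
    ∀ x : X, BClosed T1 T2 {x} := by
  intro x
  have key : ⋂₀ {U : Set X | BClosed T1 T2 U ∧ x ∈ U} = {x} := by
    apply Set.eq_singleton_iff_unique_mem.mpr
    constructor
    · intro U hU
      exact hU.2
    · intro z hz
      by_contra hzx
      have hfz : f z ≠ f x := fun h => hzx (hinj h)
      obtain ⟨U, V, hUc, hxU, _, hfzV, hdisj⟩ := hgraph x (f z) hfz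
      have hzU : z ∈ U := hz U ⟨hUc, hxU⟩
      have : f z ∈ f '' U ∩ V := ⟨⟨z, hzU, rfl⟩, hfzV⟩
      rw [hdisj] at this
      exact this
  rw [← key]
  exact hInter _ (fun C hC => hC.1)
end
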